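/- arXiv:2407.19423 — 3 statements merged into one kernel-verified Lean document; each statement's English description precedes it below -/
import Mathlib

section
/- If a finite simplicial complex K is tight over a field F but its geometric realization is not connected, then K is the complex S^0 = ∂Δ^[2] consisting of two disjoint vertices. -/
/-- An (abstract) simplicial complex: a collection of finite subsets of `ℕ`
closed under taking subsets. -/
def IsComplex (K : Finset (Finset ℕ)) : Prop :=
  ∀ σ ∈ K, ∀ τ ⊆ σ, τ ∈ K

/-- The vertex set of a complex: the union of all its simplices. -/
def verts (K : Finset (Finset ℕ)) : Finset ℕ := K.sup id

/-- The space of (augmented) simplicial `j`-chains: formal `F`-linear combinations of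
simplices of cardinality `j` (so chain degree `j` corresponds to dimension `j - 1`;
degree `0` is spanned by the empty simplex). -/
abbrev Chain (F : Type*) [Field F] (K : Finset (Finset ℕ)) (j : ℕ) : Type _ :=
  {σ // σ ∈ K.filter (fun σ => σ.card = j)} → F

/-- The simplicial boundary operator (of the augmented chain complex), with the usual
signs `(-1)^{position of the deleted vertex}`. -/
noncomputable def bdry (F : Type*) [Field F] (K : Finset (Finset ℕ)) (j : ℕ) :
    Chain F K (j + 1) →ₗ[F] Chain F K j where
  toFun c := fun τ =>
    ∑ v ∈ verts K,
      if h : v ∉ τ.1 ∧ insert v τ.1 ∈ K.filter (fun σ => σ.card = j + 1) then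
        (-1 : F) ^ ((τ.1.filter (fun u => u < v)).card) * c ⟨insert v τ.1, h.2⟩
      else 0
  map_add' c d := by
    funext τ
    show _ = (_ : F) + (_ : F)
    rw [← Finset.sum_add_distrib]
    refine Finset.sum_congr rfl fun v _ => ?_
    by_cases h : v ∉ τ.1 ∧ insert v τ.1 ∈ K.filter (fun σ => σ.card = j + 1)
    · rw [dif_pos h, dif_pos h, dif_pos h, ← mul_add]
      rfl
    · rw [dif_neg h, dif_neg h, dif_neg h, add_zero]
  map_smul' a c := by
    funext τ
    show _ = a * _
    rw [Finset.mul_sum]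
    refine Finset.sum_congr rfl fun v _ => ?_
    by_cases h : v ∉ τ.1 ∧ insert v τ.1 ∈ K.filter (fun σ => σ.card = j + 1)
    · rw [dif_pos h, dif_pos h]
      show _ * (a * _) = _
      ring
    · rw [dif_neg h, dif_neg h, mul_zero]

/-- The dimension of the `j`-th homology of the augmented simplicial chain complex of `K`.
Degree `j` corresponds to the reduced homology group `H̃_{j-1}` of the realization of `K`. -/
noncomputable def hBetti (F : Type*) [Field F] (K : Finset (Finset ℕ)) : ℕ → ℕ
  | 0 => Module.finrank F (Chain F K 0) - Module.finrank F (LinearMap.range (bdry F K 0))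
  | j + 1 =>
      Module.finrank F (LinearMap.ker (bdry F K j)) -
        Module.finrank F (LinearMap.range (bdry F K (j + 1)))

/-- The reduced total Betti number `t̃b(K; F) = ∑ i dim H̃ i (K; F)` of (the geometric
realization of) `K`, with the convention `t̃b(∅; F) = 1` (coming from `β̃₋₁(∅) = 1`;
note that if `K` is nonempty and closed under subsets then `∅ ∈ K` and the augmented
chain complex accounts for `β̃₋₁` automatically). -/
noncomputable def rtb (F : Type*) [Field F] (K : Finset (Finset ℕ)) : ℕ :=
  if K = ∅ then 1 else ∑ j ∈ Finset.range ((verts K).card + 1), hBetti F K j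

/-- The full subcomplex `K|_J` of `K` on a vertex set `J`. -/
def restr (K : Finset (Finset ℕ)) (J : Finset ℕ) : Finset (Finset ℕ) :=
  K.filter (fun σ => σ ⊆ J)

/-- The total bigraded Betti number `D̃(K; F) = ∑_{J ⊆ V} t̃b(K|_J; F)`
with respect to a ground vertex set `V`. -/
noncomputable def Dtilde (F : Type*) [Field F] (V : Finset ℕ) (K : Finset (Finset ℕ)) : ℕ :=
  ∑ J ∈ V.powerset, rtb F (restr K J)


/-- The `k`-skeleton `Δ^[m]_(k)` of the full simplex on the vertex set
`[m] = {0, 1, …, m-1}`: all subsets of cardinality at most `k + 1`. -/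
def skel (m k : ℕ) : Finset (Finset ℕ) :=
  (Finset.range m).powerset.filter (fun σ => σ.card ≤ k + 1)

/-- The `k`-skeleton of the full simplex on `[m]` for an integer `k`
(so `k = -1` gives the empty complex `{∅}`). -/
def skelZ (m : ℕ) (k : ℤ) : Finset (Finset ℕ) :=
  (Finset.range m).powerset.filter (fun σ => (σ.card : ℤ) ≤ k + 1)

/-- `Δ^[m]_(k)⟨d⟩`: the union of the `k`-skeleton of the full simplex on `[m]`
with the single `d`-simplex `{0, 1, …, d}` and all its faces. -/
def skelD (m k d : ℕ) : Finset (Finset ℕ) :=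
  skel m k ∪ (Finset.range (d + 1)).powerset

/-- `K` and `L` are isomorphic simplicial complexes: some injection of the vertex
set of `K` maps the simplices of `K` exactly onto the simplices of `L`. -/
def SIso (K L : Finset (Finset ℕ)) : Prop :=
  ∃ f : ℕ → ℕ, Set.InjOn f ↑(verts K) ∧ L = K.image (fun σ => σ.image f)

/-- `g(m,d) = ∑_{j=d+1}^{m} C(m,j)·C(j-1,d)`. -/
def g (m d : ℕ) : ℕ := ∑ j ∈ Finset.Icc (d + 1) m, m.choose j * (j - 1).choose d

/-- The join `K * L` of two simplicial complexes (on disjoint vertex sets). -/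
def sJoin (K L : Finset (Finset ℕ)) : Finset (Finset ℕ) :=
  (K ×ˢ L).image fun p => p.1 ∪ p.2

/-- A `d`-dimensional simplicial complex `K` with `m` vertices is tight over `F` if
`D̃(K;F) = 2^{m-d-1}` (note `m - d - 1 = m - (d+1)` and `d + 1 = max σ∈K |σ|`),
where `D̃` is computed with respect to the vertex set of `K`. -/
def IsTight (F : Type*) [Field F] (K : Finset (Finset ℕ)) : Prop :=
  Dtilde F (verts K) K = 2 ^ ((verts K).card - K.sup Finset.card)

/-- The link of a simplex `σ` in `K`. -/
def linkK (K : Finset (Finset ℕ)) (σ : Finset ℕ) : Finset (Finset ℕ) :=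
  K.filter (fun τ => Disjoint τ σ ∧ τ ∪ σ ∈ K)

/-- `K` is pure: every maximal simplex has the maximum cardinality `dim K + 1`. -/
def IsPure (K : Finset (Finset ℕ)) : Prop :=
  ∀ σ ∈ K, (∀ τ ∈ K, σ ⊆ τ → σ = τ) → σ.card = K.sup Finset.card

/-- A near-cone (with apex vertex `0`): for every simplex `S` with `0 ∉ S` and every
`j ∈ S`, `(S \ j) ∪ {0}` is again a simplex. -/
def IsNearCone (Δ : Finset (Finset ℕ)) : Prop :=
  ∀ S ∈ Δ, 0 ∉ S → ∀ j ∈ S, insert 0 (S.erase j) ∈ Δ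

/-- `B(Δ) = {S ∈ Δ : S ∪ {0} ∉ Δ}` for a near-cone `Δ` with apex `0`. -/
def BSet (Δ : Finset (Finset ℕ)) : Finset (Finset ℕ) :=
  Δ.filter (fun S => insert 0 S ∉ Δ)

/-- A Sperner family of the finite set `X`: a family of subsets of `X`, no member
containing another member. -/
def IsSperner (X : Finset ℕ) (F : Finset (Finset ℕ)) : Prop :=
  (∀ A ∈ F, A ⊆ X) ∧ ∀ A ∈ F, ∀ B ∈ F, A ⊆ B → A = B

/-- The geometric realization of `K` is disconnected: the vertex set splits into two
nonempty parts such that every simplex lies entirely in one of the parts. -/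
def IsDisconn (K : Finset (Finset ℕ)) : Prop :=
  ∃ A B : Finset ℕ, A.Nonempty ∧ B.Nonempty ∧ Disjoint A B ∧ A ∪ B = verts K ∧
    ∀ σ ∈ K, σ ⊆ A ∨ σ ⊆ B

/-- The boundary `∂Δ^A` of the full simplex on the vertex set `A`: all proper subsets
of `A`.  (For `|A| = 1` this is the empty complex `{∅}`.) -/
def bdSimplex (A : Finset ℕ) : Finset (Finset ℕ) := A.powerset.erase A



/-!
Split the vertex set along a disconnection `A ⊔ B`, with `m = |A| + |B|` vertices. A full
subcomplex `K|_J` whose vertex set `J` meets both `A` and `B` is again disconnected, so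
`β̃₀(K|_J) ≥ 1`; adding the contribution `1` of `J = ∅` gives
`D̃ ≥ (2^|A| - 1)(2^|B| - 1) + 1 > 2^(m-2)`, so tightness forces `dim K = 0`. For a
`0`-dimensional complex every `K|_J` with `|J| ≥ 2` is disconnected, so `D̃ ≥ 2^m - m`,
while tightness says `D̃ = 2^(m-1)`; hence `m = 2`.
-/

open Finset

lemma mem_verts {K : Finset (Finset ℕ)} {v : ℕ} : v ∈ verts K ↔ ∃ σ ∈ K, v ∈ σ := by
  simp [verts, mem_sup]

lemma mem_restr {K : Finset (Finset ℕ)} {J σ : Finset ℕ} :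
    σ ∈ restr K J ↔ σ ∈ K ∧ σ ⊆ J :=
  mem_filter

lemma IsDisconn.nonempty_verts {K : Finset (Finset ℕ)} (hd : IsDisconn K) :
    (verts K).Nonempty := by
  obtain ⟨A, B, hA, -, -, hV, -⟩ := hd
  exact hV ▸ hA.mono subset_union_left

lemma IsDisconn.nonempty {K : Finset (Finset ℕ)} (hd : IsDisconn K) : K.Nonempty := by
  obtain ⟨v, hv⟩ := hd.nonempty_verts
  obtain ⟨σ, hσ, -⟩ := mem_verts.1 hv
  exact ⟨σ, hσ⟩

lemma isComplex_restr {K : Finset (Finset ℕ)} (hK : IsComplex K) (J : Finset ℕ) :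
    IsComplex (restr K J) := fun σ hσ τ hτ =>
  mem_restr.2 ⟨hK σ (mem_restr.1 hσ).1 τ hτ, hτ.trans (mem_restr.1 hσ).2⟩

namespace IsComplex

variable {K : Finset (Finset ℕ)}

lemma empty_mem (hK : IsComplex K) (hne : K.Nonempty) : ∅ ∈ K := by
  obtain ⟨σ, hσ⟩ := hne
  exact hK σ hσ ∅ (empty_subset σ)

lemma singleton_mem (hK : IsComplex K) {v : ℕ} (hv : v ∈ verts K) : {v} ∈ K := by
  obtain ⟨σ, hσ, hvσ⟩ := mem_verts.1 hv
  exact hK σ hσ {v} (singleton_subset_iff.2 hvσ)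

lemma filter_card_eq_one (hK : IsComplex K) :
    K.filter (·.card = 1) = (verts K).image ({·}) := by
  ext σ
  simp only [mem_filter, mem_image]
  constructor
  · rintro ⟨hσ, hc⟩
    obtain ⟨v, rfl⟩ := card_eq_one.1 hc
    exact ⟨v, mem_verts.2 ⟨{v}, hσ, mem_singleton_self v⟩, rfl⟩
  · rintro ⟨v, hv, rfl⟩
    exact ⟨hK.singleton_mem hv, card_singleton v⟩

lemma eq_insert_empty_image_singleton (hK : IsComplex K) (hne : K.Nonempty)
    (h1 : ∀ σ ∈ K, σ.card ≤ 1) : K = insert ∅ ((verts K).image ({·})) := by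
  rw [← hK.filter_card_eq_one]
  ext σ
  simp only [mem_insert, mem_filter]
  constructor
  · intro hσ
    rcases Nat.le_one_iff_eq_zero_or_eq_one.1 (h1 σ hσ) with h | h
    · exact Or.inl (card_eq_zero.1 h)
    · exact Or.inr ⟨hσ, h⟩
  · rintro (rfl | ⟨hσ, -⟩)
    · exact hK.empty_mem hne
    · exact hσ

lemma verts_restr (hK : IsComplex K) {J : Finset ℕ} (hJ : J ⊆ verts K) :
    verts (restr K J) = J := by
  refine Subset.antisymm (fun v hv => ?_) (fun v hv => ?_)
  · obtain ⟨σ, hσ, hvσ⟩ := mem_verts.1 hv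
    exact (mem_restr.1 hσ).2 hvσ
  · exact mem_verts.2 ⟨{v}, mem_restr.2 ⟨hK.singleton_mem (hJ hv),
      singleton_subset_iff.2 hv⟩, mem_singleton_self v⟩

lemma isDisconn_restr_of_not_subset (hK : IsComplex K) {A B : Finset ℕ} (hAB : Disjoint A B)
    (hV : A ∪ B = verts K) (hsplit : ∀ σ ∈ K, σ ⊆ A ∨ σ ⊆ B) {J : Finset ℕ}
    (hJ : J ⊆ verts K) (hJA : ¬J ⊆ A) (hJB : ¬J ⊆ B) : IsDisconn (restr K J) := by
  have hJAB : J ⊆ A ∪ B := hV ▸ hJ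
  refine ⟨J ∩ A, J ∩ B, ?_, ?_, hAB.mono inter_subset_right inter_subset_right, ?_, ?_⟩
  · obtain ⟨v, hvJ, hvB⟩ := not_subset.1 hJB
    exact ⟨v, mem_inter.2 ⟨hvJ, (mem_union.1 (hJAB hvJ)).resolve_right hvB⟩⟩
  · obtain ⟨v, hvJ, hvA⟩ := not_subset.1 hJA
    exact ⟨v, mem_inter.2 ⟨hvJ, (mem_union.1 (hJAB hvJ)).resolve_left hvA⟩⟩
  · rw [← inter_union_distrib_left, inter_eq_left.2 hJAB, hK.verts_restr hJ]
  · intro σ hσ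
    obtain ⟨hσK, hσJ⟩ := mem_restr.1 hσ
    exact (hsplit σ hσK).imp (subset_inter hσJ) (subset_inter hσJ)

lemma isDisconn_restr_of_card_le_one (hK : IsComplex K) (h1 : ∀ σ ∈ K, σ.card ≤ 1)
    {J : Finset ℕ} (hJ : J ⊆ verts K) (hJ2 : 1 < J.card) : IsDisconn (restr K J) := by
  obtain ⟨x, hx⟩ := card_pos.1 (Nat.zero_lt_of_lt hJ2)
  refine ⟨{x}, J.erase x, singleton_nonempty x, ?_, disjoint_singleton_left.2 (notMem_erase x J),
    by rw [hK.verts_restr hJ, ← insert_eq, insert_erase hx], fun σ hσ => ?_⟩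
  · rw [← card_pos, card_erase_of_mem hx]
    omega
  · obtain ⟨hσK, hσJ⟩ := mem_restr.1 hσ
    obtain ⟨v, hv⟩ := card_le_one_iff_subset_singleton.1 (h1 σ hσK)
    by_cases hvx : v = x
    · exact Or.inl (hvx ▸ hv)
    · refine Or.inr fun w hw => mem_erase.2 ⟨?_, hσJ hw⟩
      rw [mem_singleton.1 (hv hw)]
      exact hvx

end IsComplex

section Homology

variable (F : Type*) [Field F] (K : Finset (Finset ℕ))

lemma finrank_chain (j : ℕ) :
    Module.finrank F (Chain F K j) = (K.filter (·.card = j)).card :=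
  (Module.finrank_fintype_fun_eq_card F).trans (Fintype.card_coe _)

/-- Extending the chain by zero to all finsets removes the membership proofs from `bdry`. -/
lemma bdry_apply_eq_sum {j : ℕ} (c : Chain F K (j + 1))
    (τ : {σ // σ ∈ K.filter (·.card = j)}) :
    bdry F K j c τ = ∑ v ∈ verts K,
      if v ∉ τ.1 ∧ insert v τ.1 ∈ K.filter (·.card = j + 1) then
        (-1 : F) ^ (τ.1.filter (· < v)).card *
          (fun σ => if h : σ ∈ K.filter (·.card = j + 1) then c ⟨σ, h⟩ else 0) (insert v τ.1)
      else 0 := by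
  refine sum_congr rfl fun v _ => ?_
  split_ifs with h <;> simp_all

noncomputable def vertexSum (S : Finset ℕ) : Chain F K 1 →ₗ[F] F :=
  Fintype.linearCombination F fun τ => if (τ : Finset ℕ) ⊆ S then 1 else 0

lemma vertexSum_single (S : Finset ℕ) (τ : {σ // σ ∈ K.filter (·.card = 1)}) :
    vertexSum F K S (Pi.single τ 1) = if τ.1 ⊆ S then 1 else 0 := by
  simp [vertexSum]

variable {F K}

lemma vertexSum_bdry_one (hK : IsComplex K) {S : Finset ℕ}
    (hS : ∀ σ ∈ K, σ ⊆ S ∨ Disjoint σ S) (c : Chain F K 2) :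
    vertexSum F K S (bdry F K 1 c) = 0 := by
  classical
  set e : Finset ℕ → F := fun σ => if h : σ ∈ K.filter (·.card = 1 + 1) then c ⟨σ, h⟩ else 0
  set f : ℕ × ℕ → F := fun p =>
    if p.1 ∈ S ∧ p.2 ≠ p.1 ∧ {p.2, p.1} ∈ K then
      (if p.1 < p.2 then -1 else 1) * e {p.2, p.1} else 0 with hf
  have hreindex : vertexSum F K S (bdry F K 1 c) = ∑ p ∈ verts K ×ˢ verts K, f p := by
    rw [vertexSum, Fintype.linearCombination_apply]
    simp_rw [bdry_apply_eq_sum]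
    rw [sum_coe_sort (K.filter (·.card = 1))
      (fun σ => (∑ v ∈ verts K, if v ∉ σ ∧ insert v σ ∈ K.filter (·.card = 1 + 1) then
        (-1 : F) ^ (σ.filter (· < v)).card * e (insert v σ) else 0) •
        if σ ⊆ S then (1 : F) else 0), hK.filter_card_eq_one,
      sum_image fun _ _ _ _ h => singleton_injective h, sum_product]
    refine sum_congr rfl fun u _ => ?_
    rw [smul_eq_mul, sum_mul]
    refine sum_congr rfl fun w _ => ?_
    by_cases hwu : w = u
    · subst hwu; simp [hf]
    have hcard : ({w, u} : Finset ℕ).card = 1 + 1 := card_pair hwu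
    by_cases huw : u < w <;> simp [hf, hwu, huw, hcard, filter_singleton, ite_and]
  rw [hreindex]
  -- The terms at `(u, w)` and `(w, u)` come from the same edge with opposite signs.
  refine sum_involution (fun p _ => p.swap) (fun p _ => ?_) (fun p _ hp => ?_)
    (fun p hp => mem_product.2 ((mem_product.1 hp).symm)) (fun p _ => Prod.swap_swap p)
  · obtain ⟨u, w⟩ := p
    simp only [hf, Prod.swap, pair_comm u w]
    by_cases hedge : w ≠ u ∧ {w, u} ∈ K
    · obtain ⟨hwu, hmem⟩ := hedge
      have hS' : w ∈ S ↔ u ∈ S := by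
        rcases hS _ hmem with h | h
        · simp only [insert_subset_iff, singleton_subset_iff] at h; tauto
        · simp only [disjoint_insert_left, disjoint_singleton_left] at h; tauto
      simp only [hS', hmem, Ne, hwu, Ne.symm hwu, not_false_eq_true, and_true]
      split_ifs <;> first | omega | ring
    · rw [if_neg (by tauto), if_neg (by tauto), add_zero]
  · obtain ⟨u, w⟩ := p
    rintro h
    obtain rfl : u = w := congrArg Prod.snd h
    simp [hf] at hp

lemma card_filter_card_eq_zero_le_one : (K.filter (·.card = 0)).card ≤ 1 :=
  card_le_one.2 fun σ hσ τ hτ => by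
    rw [card_eq_zero.1 (mem_filter.1 hσ).2, card_eq_zero.1 (mem_filter.1 hτ).2]

/-- The vertex sums over the two sides of a disconnection are independent functionals on
`1`-chains that kill all boundaries, while the augmentation `bdry F K 0` has rank at most `1`. -/
lemma one_le_hBetti_one (hK : IsComplex K) (hd : IsDisconn K) : 1 ≤ hBetti F K 1 := by
  classical
  obtain ⟨A, B, ⟨x, hxA⟩, ⟨y, hyB⟩, hAB, hV, hsplit⟩ := hd
  have hxK : {x} ∈ K.filter (·.card = 1) :=
    mem_filter.2 ⟨hK.singleton_mem (hV ▸ mem_union_left B hxA), card_singleton x⟩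
  have hyK : {y} ∈ K.filter (·.card = 1) :=
    mem_filter.2 ⟨hK.singleton_mem (hV ▸ mem_union_right A hyB), card_singleton y⟩
  have hxB : x ∉ B := disjoint_left.1 hAB hxA
  have hyA : y ∉ A := disjoint_right.1 hAB hyB
  set Φ := (vertexSum F K A).prod (vertexSum F K B)
  have hΦ_surj : Function.Surjective Φ := fun z =>
    ⟨z.1 • Pi.single ⟨{x}, hxK⟩ 1 + z.2 • Pi.single ⟨{y}, hyK⟩ 1, by
      simp [Φ, vertexSum_single, hxA, hxB, hyA, hyB]⟩
  have hrange : LinearMap.range (bdry F K 1) ≤ LinearMap.ker Φ := by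
    rintro _ ⟨c, rfl⟩
    refine Prod.ext (vertexSum_bdry_one hK (fun σ hσ => ?_) c)
      (vertexSum_bdry_one hK (fun σ hσ => ?_) c)
    · exact (hsplit σ hσ).imp_right fun h => hAB.symm.mono_left h
    · exact (hsplit σ hσ).symm.imp_right fun h => hAB.mono_left h
  have hΦ_rank := LinearMap.finrank_range_add_finrank_ker Φ
  rw [LinearMap.range_eq_top.2 hΦ_surj, finrank_top, Module.finrank_prod,
    Module.finrank_self, finrank_chain] at hΦ_rank
  have haug_rank : Module.finrank F (LinearMap.range (bdry F K 0)) +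
      Module.finrank F (LinearMap.ker (bdry F K 0)) = (K.filter (·.card = 1)).card :=
    (LinearMap.finrank_range_add_finrank_ker _).trans (finrank_chain F K 1)
  have haug_le : Module.finrank F (LinearMap.range (bdry F K 0)) ≤ 1 :=
    (Submodule.finrank_le _).trans ((finrank_chain F K 0).trans_le
      card_filter_card_eq_zero_le_one)
  have := Submodule.finrank_mono hrange
  show 1 ≤ Module.finrank F (LinearMap.ker (bdry F K 0)) -
    Module.finrank F (LinearMap.range (bdry F K 1))
  omega

lemma hBetti_le_rtb (hK : K ≠ ∅) {j : ℕ} (hj : j ≤ (verts K).card) :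
    hBetti F K j ≤ rtb F K := by
  rw [rtb, if_neg hK]
  exact single_le_sum (f := hBetti F K) (fun _ _ => Nat.zero_le _)
    (mem_range.2 (Nat.lt_succ_of_le hj))

lemma one_le_rtb_of_isDisconn (hK : IsComplex K) (hd : IsDisconn K) : 1 ≤ rtb F K :=
  (one_le_hBetti_one hK hd).trans
    (hBetti_le_rtb hd.nonempty.ne_empty (card_pos.2 hd.nonempty_verts))

variable (F) in
lemma rtb_singleton_empty : rtb F ({∅} : Finset (Finset ℕ)) = 1 := by
  have hverts : verts ({∅} : Finset (Finset ℕ)) = ∅ := by simp [verts]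
  have hrange : Module.finrank F (LinearMap.range (bdry F {∅} 0)) = 0 :=
    Nat.eq_zero_of_le_zero <| (LinearMap.finrank_range_le _).trans_eq <| by
      rw [finrank_chain]; simp
  rw [rtb, if_neg (singleton_ne_empty ∅), hverts, card_empty, zero_add, sum_range_one]
  show Module.finrank F (Chain F {∅} 0) - _ = 1
  rw [finrank_chain, hrange]
  simp [filter_singleton]

variable (F) in
lemma card_add_one_le_Dtilde (hK : IsComplex K) (hne : K.Nonempty)
    {P : Finset (Finset ℕ)} (hP : P ⊆ (verts K).powerset)
    (hdisc : ∀ J ∈ P, IsDisconn (restr K J)) : P.card + 1 ≤ Dtilde F (verts K) K := by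
  have hempty : ∅ ∉ P := fun h => by
    simpa [hK.verts_restr (empty_subset _)] using (hdisc ∅ h).nonempty_verts
  have hrtb : ∀ J ∈ insert ∅ P, 1 ≤ rtb F (restr K J) := by
    intro J hJ
    rcases mem_insert.1 hJ with rfl | hJ
    · have hrestr : restr K ∅ = {∅} := by
        ext σ
        simp only [mem_restr, subset_empty, mem_singleton]
        exact ⟨And.right, fun h => ⟨h ▸ hK.empty_mem hne, h⟩⟩
      rw [hrestr, rtb_singleton_empty]
    · exact one_le_rtb_of_isDisconn (isComplex_restr hK J) (hdisc J hJ)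
  calc P.card + 1 = (insert ∅ P).card := (card_insert_of_notMem hempty).symm
    _ ≤ ∑ J ∈ insert ∅ P, rtb F (restr K J) := by simpa using card_nsmul_le_sum _ _ 1 hrtb
    _ ≤ Dtilde F (verts K) K :=
      sum_le_sum_of_subset (insert_subset (empty_mem_powerset _) hP)

end Homology

section Counting

variable {α : Type*} [DecidableEq α]

lemma card_filter_not_subset_or_subset {V A B : Finset α} (hAB : Disjoint A B)
    (hV : A ∪ B = V) :
    (V.powerset.filter fun J => ¬(J ⊆ A ∨ J ⊆ B)).card + 2 ^ A.card + 2 ^ B.card =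
      2 ^ V.card + 1 := by
  have hsides : V.powerset.filter (fun J => J ⊆ A ∨ J ⊆ B) = A.powerset ∪ B.powerset := by
    ext J
    simp only [mem_filter, mem_powerset, mem_union, and_iff_right_iff_imp]
    rintro (h | h)
    · exact h.trans (hV ▸ subset_union_left)
    · exact h.trans (hV ▸ subset_union_right)
  have hinter : A.powerset ∩ B.powerset = {∅} := by
    ext J
    simp only [mem_inter, mem_powerset, mem_singleton, ← subset_inter_iff,
      disjoint_iff_inter_eq_empty.1 hAB, subset_empty]
  have hsplit := card_filter_add_card_filter_not (s := V.powerset) (p := fun J => J ⊆ A ∨ J ⊆ B)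
  have hunion := card_union_add_card_inter A.powerset B.powerset
  rw [hinter, card_singleton, card_powerset, card_powerset] at hunion
  rw [hsides, card_powerset] at hsplit
  omega

lemma card_filter_one_lt_card_powerset (V : Finset α) :
    (V.powerset.filter (1 < ·.card)).card + V.card + 1 = 2 ^ V.card := by
  have hsmall : V.powerset.filter (fun J => ¬1 < J.card) = insert ∅ (V.powersetCard 1) := by
    ext J
    simp only [mem_filter, mem_powerset, not_lt, mem_insert, mem_powersetCard]
    rw [Nat.le_one_iff_eq_zero_or_eq_one, card_eq_zero]
    constructor
    · rintro ⟨hJ, rfl | h⟩ <;> tauto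
    · rintro (rfl | h) <;> simp_all
  have hsplit := card_filter_add_card_filter_not (s := V.powerset) (p := fun J => 1 < J.card)
  rw [hsmall, card_insert_of_notMem (by simp), card_powersetCard, Nat.choose_one_right,
    card_powerset] at hsplit
  omega

end Counting

lemma two_pow_sub_two_add_two_pow_add_two_pow_lt {a b : ℕ} (ha : 1 ≤ a) (hb : 1 ≤ b) :
    2 ^ (a + b - 2) + 2 ^ a + 2 ^ b < 2 ^ (a + b) + 2 := by
  obtain ⟨a, rfl⟩ := Nat.exists_eq_add_of_le' ha
  obtain ⟨b, rfl⟩ := Nat.exists_eq_add_of_le' hb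
  have hsub : 2 ^ (a + 1 + (b + 1) - 2) = 2 ^ a * 2 ^ b := by
    rw [show a + 1 + (b + 1) - 2 = a + b by omega, pow_add]
  have hadd : 2 ^ (a + 1 + (b + 1)) = 4 * (2 ^ a * 2 ^ b) := by ring
  rw [hsub, hadd, pow_succ, pow_succ]
  nlinarith [Nat.one_le_two_pow (n := a), Nat.one_le_two_pow (n := b)]

lemma eq_two_of_two_pow_le {m : ℕ} (hm : 2 ≤ m) (h : 2 ^ m ≤ 2 ^ (m - 1) + m) : m = 2 := by
  obtain ⟨k, rfl⟩ := Nat.exists_eq_add_of_le' hm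
  rcases k with _ | k
  · rfl
  · have := Nat.lt_two_pow_self (n := k)
    rw [show k + 1 + 2 - 1 = k + 2 by omega, pow_succ, pow_succ, pow_succ] at h
    omega

namespace IsTight

variable {F : Type*} [Field F] {K : Finset (Finset ℕ)}

lemma sup_card_le_one (hK : IsComplex K) (ht : IsTight F K) (hd : IsDisconn K) :
    K.sup card ≤ 1 := by
  obtain ⟨A, B, hA, hB, hAB, hV, hsplit⟩ := id hd
  by_contra! hs
  have hlow := card_add_one_le_Dtilde F hK hd.nonempty (filter_subset _ _) fun J hJ =>
    hK.isDisconn_restr_of_not_subset hAB hV hsplit (mem_powerset.1 (mem_filter.1 hJ).1)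
      (not_or.1 (mem_filter.1 hJ).2).1 (not_or.1 (mem_filter.1 hJ).2).2
  have hup : Dtilde F (verts K) K ≤ 2 ^ ((verts K).card - 2) :=
    ht.trans_le (Nat.pow_le_pow_right two_pos (by omega))
  have hcount := card_filter_not_subset_or_subset hAB hV
  have hlt := two_pow_sub_two_add_two_pow_add_two_pow_lt (card_pos.2 hA) (card_pos.2 hB)
  rw [← card_union_of_disjoint hAB, hV] at hlt
  omega

lemma card_verts_eq_two (hK : IsComplex K) (ht : IsTight F K) (hd : IsDisconn K)
    (h1 : ∀ σ ∈ K, σ.card ≤ 1) : (verts K).card = 2 := by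
  obtain ⟨A, B, hA, hB, hAB, hV, -⟩ := id hd
  obtain ⟨v, hv⟩ := hd.nonempty_verts
  have hsup : K.sup card = 1 :=
    le_antisymm (Finset.sup_le h1) (le_sup (f := card) (hK.singleton_mem hv))
  have hlow := card_add_one_le_Dtilde F hK hd.nonempty (filter_subset _ _) fun J hJ =>
    hK.isDisconn_restr_of_card_le_one h1 (mem_powerset.1 (mem_filter.1 hJ).1)
      (mem_filter.1 hJ).2
  rw [ht, hsup] at hlow
  have hcount := card_filter_one_lt_card_powerset (verts K)
  have hm : 2 ≤ (verts K).card := by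
    rw [← hV, card_union_of_disjoint hAB]
    exact Nat.add_le_add (card_pos.2 hA) (card_pos.2 hB)
  exact eq_two_of_two_pow_le hm (by omega)

end IsTight

/-- A tight complex whose realization is disconnected must be
`S⁰ = ∂Δ^[2]`, i.e. two disjoint vertices. -/
theorem stmt15 (F : Type*) [Field F] (K : Finset (Finset ℕ))
    (hK : IsComplex K) (ht : IsTight F K) (hd : IsDisconn K) :
    ∃ a b : ℕ, a ≠ b ∧ K = {∅, {a}, {b}} := by
  have h1 : ∀ σ ∈ K, σ.card ≤ 1 := fun σ hσ =>
    (le_sup (f := card) hσ).trans (ht.sup_card_le_one hK hd)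
  obtain ⟨a, b, hab, hV⟩ := card_eq_two.1 (ht.card_verts_eq_two hK hd h1)
  refine ⟨a, b, hab, ?_⟩
  rw [hK.eq_insert_empty_image_singleton hd.nonempty h1, hV]
  simp
end

section
/- For each integer m ≥ 1, the function d ↦ g(m,d) on {0,1,…,m-1} attains its maximum at d = ⌊(m-1)/3⌋ and at no other value of d; that is, g(m,d) < g(m,⌊(m-1)/3⌋) for every 0 ≤ d ≤ m-1 with d ≠ ⌊(m-1)/3⌋. -/
/-!
Pascal's rule and `∑ⱼ C(m,j) C(j,k) = C(m,k) 2^(m-k)` give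
`g(m,d+1) + g(m,d) = 2^(m-d-1) C(m,d+1)`, hence `g(m,d+1) - g(m,d) = 2^(m-d-1) u(m,d) + 2(-1)^d`
for an integer `u = gDiffCoeff` which again satisfies Pascal's rule
`u(m+1,d+1) = u(m,d+1) + u(m,d)`. Once `m ≥ d+3` the power `2^(m-d-1) ≥ 4` swamps `±2`, so the
step from `d` to `d+1` has the sign of `u(m,d)`.

Induction on `d`, walking `m` upwards with Pascal's rule, shows `u(m,d) < 0` for
`d+2 ≤ m ≤ 3d+3` and `u(m,d) > 0` for `m ≥ 3d+5`. The columns are glued at `m = 3d+5`, where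
`C(3d+5,d+2) = 2 C(3d+5,d+1)` makes `u(3d+5,d+1) = -2 u(3d+5,d)`. So `g(m,·)` increases strictly
up to `⌊(m-1)/3⌋` and decreases strictly afterwards.
-/

open Finset

theorem Nat.sum_Icc_choose_mul_choose (n k : ℕ) :
    ∑ j ∈ Icc k n, n.choose j * j.choose k = n.choose k * 2 ^ (n - k) := by
  rcases lt_or_ge n k with hnk | hkn
  · rw [Icc_eq_empty_of_lt hnk, Nat.choose_eq_zero_of_lt hnk, sum_empty, zero_mul]
  rw [← Ico_add_one_right_eq_Icc, sum_Ico_eq_sum_range, show n + 1 - k = n - k + 1 by omega,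
    ← Nat.sum_range_choose, mul_sum]
  refine sum_congr rfl fun i _ => ?_
  rw [Nat.choose_mul (Nat.le_add_right k i), Nat.add_sub_cancel_left]

theorem g_add_one_add_g (m d : ℕ) :
    g m (d + 1) + g m d = m.choose (d + 1) * 2 ^ (m - (d + 1)) := by
  have hg : g m (d + 1) = ∑ j ∈ Icc (d + 1) m, m.choose j * (j - 1).choose (d + 1) := by
    refine sum_subset (Icc_subset_Icc_left (Nat.le_succ _)) fun j hj hj' => ?_
    rw [mem_Icc] at hj hj'
    rw [show j = d + 1 by omega, Nat.add_sub_cancel, Nat.choose_succ_self, mul_zero]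
  rw [hg, g, ← sum_add_distrib, ← Nat.sum_Icc_choose_mul_choose]
  refine sum_congr rfl fun j hj => ?_
  obtain ⟨i, rfl⟩ : ∃ i, j = i + 1 := ⟨j - 1, by rw [mem_Icc] at hj; omega⟩
  rw [← mul_add, Nat.add_sub_cancel, Nat.choose_succ_succ', add_comm (i.choose d)]

theorem g_zero_add_one (m : ℕ) : g m 0 + 1 = 2 ^ m := by
  have h := Nat.sum_Icc_choose_mul_choose m 0
  rw [← insert_Icc_add_one_left_eq_Icc (Nat.zero_le m), sum_insert (by simp)] at h
  simpa [g, add_comm] using h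

def gDiffCoeff (m : ℕ) : ℕ → ℤ
  | 0 => m - 4
  | d + 1 => m.choose (d + 2) - 2 * m.choose (d + 1) - 2 * gDiffCoeff m d

theorem g_add_one_sub_g {m d : ℕ} (h : d + 1 ≤ m) :
    (g m (d + 1) : ℤ) - g m d = 2 ^ (m - (d + 1)) * gDiffCoeff m d + 2 * (-1) ^ d := by
  induction d with
  | zero =>
    obtain ⟨n, rfl⟩ : ∃ n, m = n + 1 := ⟨m - 1, by omega⟩
    have hsum : (g (n + 1) 1 : ℤ) + g (n + 1) 0 = (n + 1) * 2 ^ n := by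
      have h := g_add_one_add_g (n + 1) 0
      rw [zero_add, Nat.choose_one_right, Nat.add_sub_cancel] at h
      exact_mod_cast h
    have hzero : (g (n + 1) 0 : ℤ) + 1 = 2 ^ (n + 1) := by exact_mod_cast g_zero_add_one (n + 1)
    rw [gDiffCoeff, Nat.add_sub_cancel]
    push_cast
    linear_combination hsum - 2 * hzero
  | succ d ih =>
    obtain ⟨e, he⟩ : ∃ e, m - (d + 1) = e + 1 := ⟨m - (d + 2), by omega⟩
    have hsum₀ : (g m (d + 1) : ℤ) + g m d = m.choose (d + 1) * 2 ^ (e + 1) := by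
      rw [← he]; exact_mod_cast g_add_one_add_g m d
    have hsum₁ : (g m (d + 2) : ℤ) + g m (d + 1) = m.choose (d + 2) * 2 ^ e := by
      rw [show e = m - (d + 2) by omega]; exact_mod_cast g_add_one_add_g m (d + 1)
    rw [show m - (d + 1 + 1) = e by omega, gDiffCoeff]
    rw [he] at ih
    linear_combination hsum₁ - hsum₀ - ih (by omega)

theorem gDiffCoeff_add_one_add_one (m d : ℕ) :
    gDiffCoeff (m + 1) (d + 1) = gDiffCoeff m (d + 1) + gDiffCoeff m d := by
  induction d with
  | zero =>
    simp only [gDiffCoeff, Nat.choose_succ_succ' m 1, Nat.choose_one_right, zero_add]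
    push_cast
    ring
  | succ d ih =>
    rw [gDiffCoeff.eq_2, ih, Nat.choose_succ_succ' m (d + 2), Nat.choose_succ_succ' m (d + 1),
      gDiffCoeff.eq_2 m (d + 1), gDiffCoeff.eq_2 m d]
    push_cast
    ring

theorem gDiffCoeff_add_two_self (d : ℕ) : gDiffCoeff (d + 2) d = -d - 1 - (-1) ^ d := by
  induction d with
  | zero => norm_num [gDiffCoeff]
  | succ d ih =>
    rw [gDiffCoeff_add_one_add_one, gDiffCoeff, Nat.choose_self, Nat.choose_succ_self_right, ih]
    push_cast
    ring

theorem Nat.choose_three_mul_add_five_add_two (d : ℕ) :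
    (3 * d + 5).choose (d + 2) = 2 * (3 * d + 5).choose (d + 1) := by
  have h : (3 * d + 5).choose (d + 2) * (d + 2) =
      (3 * d + 5).choose (d + 1) * (3 * d + 5 - (d + 1)) :=
    Nat.choose_succ_right_eq (3 * d + 5) (d + 1)
  rw [show 3 * d + 5 - (d + 1) = 2 * (d + 2) by omega] at h
  exact Nat.eq_of_mul_eq_mul_right (show 0 < d + 2 by omega) (by rw [h]; ring)

theorem gDiffCoeff_three_mul_add_five (d : ℕ) :
    gDiffCoeff (3 * d + 5) (d + 1) = -2 * gDiffCoeff (3 * d + 5) d := by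
  rw [gDiffCoeff, Nat.choose_three_mul_add_five_add_two]
  push_cast
  ring

theorem gDiffCoeff_three_mul_add_six (d : ℕ) :
    gDiffCoeff (3 * d + 6) (d + 1) = -gDiffCoeff (3 * d + 5) d := by
  rw [gDiffCoeff_add_one_add_one, gDiffCoeff_three_mul_add_five]
  ring

theorem gDiffCoeff_three_mul_add_ten (d : ℕ) :
    gDiffCoeff (3 * d + 10) (d + 2) = gDiffCoeff (3 * d + 8) d := by
  have h₁ := gDiffCoeff_add_one_add_one (3 * d + 9) (d + 1)
  have h₂ := gDiffCoeff_three_mul_add_six (d + 1)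
  have h₃ := gDiffCoeff_add_one_add_one (3 * d + 8) d
  rw [show 3 * (d + 1) + 6 = 3 * d + 9 by ring, show 3 * (d + 1) + 5 = 3 * d + 8 by ring] at h₂
  linarith

theorem gDiffCoeff_add_one_le_neg_one {d : ℕ}
    (hneg : ∀ m, d + 2 ≤ m → m ≤ 3 * d + 3 → gDiffCoeff m d ≤ -1)
    (hpos : 1 ≤ gDiffCoeff (3 * d + 5) d) :
    ∀ m, d + 3 ≤ m → m ≤ 3 * d + 6 → gDiffCoeff m (d + 1) ≤ -1 := by
  intro m hm₁ hm₂
  rcases (by omega : m ≤ 3 * d + 4 ∨ m = 3 * d + 5 ∨ m = 3 * d + 6) with hm | rfl | rfl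
  · induction m, hm₁ using Nat.le_induction with
    | base =>
      rw [gDiffCoeff_add_two_self]
      rcases neg_one_pow_eq_or ℤ (d + 1) with h | h <;> rw [h] <;> push_cast <;> omega
    | succ m hm ih =>
      rw [gDiffCoeff_add_one_add_one]
      linarith [ih (by omega) (by omega), hneg m (by omega) (by omega)]
  · rw [gDiffCoeff_three_mul_add_five]; linarith
  · rw [gDiffCoeff_three_mul_add_six]; linarith

theorem one_le_gDiffCoeff_add_one {d : ℕ} (hmid : 0 ≤ gDiffCoeff (3 * d + 7) (d + 1))
    (hpos : ∀ m, 3 * d + 5 ≤ m → 1 ≤ gDiffCoeff m d) :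
    ∀ m, 3 * d + 8 ≤ m → 1 ≤ gDiffCoeff m (d + 1) := by
  intro m hm
  induction m, hm using Nat.le_induction with
  | base => rw [gDiffCoeff_add_one_add_one]; linarith [hpos (3 * d + 7) (by omega)]
  | succ m hm ih => rw [gDiffCoeff_add_one_add_one]; linarith [hpos m (by omega)]

-- The third conjunct is carried along because `u(3d+10, d+2) = u(3d+8, d)` reaches two columns back.
theorem gDiffCoeff_signs (d : ℕ) :
    (∀ m, d + 2 ≤ m → m ≤ 3 * d + 3 → gDiffCoeff m d ≤ -1) ∧
      (∀ m, 3 * d + 5 ≤ m → 1 ≤ gDiffCoeff m d) ∧ 1 ≤ gDiffCoeff (3 * d + 7) (d + 1) := by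
  induction d with
  | zero =>
    refine ⟨fun m h₁ h₂ => ?_, fun m h => ?_, by decide⟩ <;> rw [gDiffCoeff] <;> omega
  | succ d ih =>
    obtain ⟨hneg, hpos, hmid⟩ := ih
    refine ⟨gDiffCoeff_add_one_le_neg_one hneg (hpos _ le_rfl),
      one_le_gDiffCoeff_add_one (by linarith) hpos, ?_⟩
    rw [show 3 * (d + 1) + 7 = 3 * d + 10 by ring, gDiffCoeff_three_mul_add_ten]
    exact hpos _ (by omega)

theorem g_lt_g_add_one_of_one_le {m d : ℕ} (hm : d + 3 ≤ m) (hu : 1 ≤ gDiffCoeff m d) :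
    g m d < g m (d + 1) := by
  have hdiff := g_add_one_sub_g (show d + 1 ≤ m by omega)
  have hpow : (4 : ℤ) ≤ 2 ^ (m - (d + 1)) :=
    le_trans (by norm_num) (pow_le_pow_right₀ (by norm_num : (1 : ℤ) ≤ 2) (by omega : 2 ≤ _))
  have hprod := mul_le_mul_of_nonneg_left hu (show (0 : ℤ) ≤ 2 ^ (m - (d + 1)) by positivity)
  rcases neg_one_pow_eq_or ℤ d with hs | hs <;> rw [hs] at hdiff <;> push_cast at hdiff ⊢ <;> linarith

theorem g_add_one_lt_g_of_le_neg_one {m d : ℕ} (hm : d + 3 ≤ m) (hu : gDiffCoeff m d ≤ -1) :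
    g m (d + 1) < g m d := by
  have hdiff := g_add_one_sub_g (show d + 1 ≤ m by omega)
  have hpow : (4 : ℤ) ≤ 2 ^ (m - (d + 1)) :=
    le_trans (by norm_num) (pow_le_pow_right₀ (by norm_num : (1 : ℤ) ≤ 2) (by omega : 2 ≤ _))
  have hprod := mul_le_mul_of_nonneg_left hu (show (0 : ℤ) ≤ 2 ^ (m - (d + 1)) by positivity)
  rcases neg_one_pow_eq_or ℤ d with hs | hs <;> rw [hs] at hdiff <;> push_cast at hdiff ⊢ <;> linarith

theorem g_lt_g_add_one {m d : ℕ} (h : 3 * d + 4 ≤ m) : g m d < g m (d + 1) := by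
  rcases (by omega : 3 * d + 5 ≤ m ∨ m = 3 * d + 4) with hm | rfl
  · exact g_lt_g_add_one_of_one_le (by omega) ((gDiffCoeff_signs d).2.1 m hm)
  cases d with
  | zero =>
    -- `u(4,0) = 0`, and the term `2(-1)^0` decides.
    have hdiff := g_add_one_sub_g (show 0 + 1 ≤ 4 by omega)
    norm_num [gDiffCoeff] at hdiff ⊢
    omega
  | succ e =>
    refine g_lt_g_add_one_of_one_le (by omega) ?_
    rw [show 3 * (e + 1) + 4 = 3 * e + 7 by ring]
    exact (gDiffCoeff_signs e).2.2

theorem g_add_one_lt_g {m d : ℕ} (h₁ : d + 2 ≤ m) (h₂ : m ≤ 3 * d + 3) : g m (d + 1) < g m d := by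
  rcases h₁.eq_or_lt with rfl | hm
  · have hdiff := g_add_one_sub_g (show d + 1 ≤ d + 2 by omega)
    rw [gDiffCoeff_add_two_self, show d + 2 - (d + 1) = 1 by omega] at hdiff
    have : (g (d + 2) (d + 1) : ℤ) < g (d + 2) d := by linarith
    exact_mod_cast this
  · exact g_add_one_lt_g_of_le_neg_one hm ((gDiffCoeff_signs d).1 m h₁ h₂)

theorem strictMonoOn_g (m : ℕ) : StrictMonoOn (g m) (Set.Iic ((m - 1) / 3)) :=
  strictMonoOn_of_lt_add_one Set.ordConnected_Iic fun _ _ _ ha =>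
    g_lt_g_add_one (by rw [Set.mem_Iic] at ha; omega)

theorem strictAntiOn_g (m : ℕ) : StrictAntiOn (g m) (Set.Icc ((m - 1) / 3) (m - 1)) :=
  strictAntiOn_of_add_one_lt Set.ordConnected_Icc fun _ _ ha ha' =>
    g_add_one_lt_g (by rw [Set.mem_Icc] at ha'; omega) (by rw [Set.mem_Icc] at ha; omega)

theorem stmt17_general (m : ℕ) (d : ℕ) (hd : d ≤ m - 1) (hne : d ≠ (m - 1) / 3) :
    g m d < g m ((m - 1) / 3) := by
  rcases hne.lt_or_gt with hlt | hgt
  · exact strictMonoOn_g m (Set.mem_Iic.2 hlt.le) (Set.mem_Iic.2 le_rfl) hlt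
  · exact strictAntiOn_g m ⟨le_rfl, Nat.div_le_self _ _⟩ ⟨hgt.le, hd⟩ hgt

/-- For `m ≥ 1`, the function `d ↦ g(m,d)` on `{0, …, m-1}` attains its
maximum at `d = ⌊(m-1)/3⌋` and at no other value. -/
theorem stmt17 (m : ℕ) (hm : 1 ≤ m) (d : ℕ) (hd : d ≤ m - 1) (hne : d ≠ (m - 1) / 3) :
    g m d < g m ((m - 1) / 3) :=
  stmt17_general m d hd hne
end

section
/- For all integers m and d with 1 ≤ d < m, one has Σ_{j=d}^{m} C(m,j)·C(j-1,d-1) = C(m,d) · ∫_0^1 d·x^{d-1}·(1+x)^{m-d} dx, where the integral is the Riemann/Lebesgue integral over [0,1]; equivalently, g(m,d-1)/C(m,d) = ∫_0^1 d·x^{d-1}·(1+x)^{m-d} dx. -/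
/-! Substituting `j = d + k`, each term satisfies
`C(m, d+k) · C(d+k-1, d-1) = C(m, d) · d · C(m-d, k) / (d + k)`, while expanding
`(1 + x)^(m-d)` binomially and integrating termwise gives
`∫₀¹ d x^(d-1) (1+x)^(m-d) dx = ∑ₖ d · C(m-d, k) / (d + k)`. -/

open Finset

theorem integral_pow_mul_one_add_pow (a n : ℕ) :
    ∫ x in (0:ℝ)..1, x ^ a * (1 + x) ^ n =
      ∑ k ∈ range (n + 1), (n.choose k : ℝ) / (a + k + 1) := by
  have expand (x : ℝ) :
      x ^ a * (1 + x) ^ n = ∑ k ∈ range (n + 1), (n.choose k : ℝ) * x ^ (a + k) := by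
    rw [add_comm, add_pow, mul_sum]
    refine sum_congr rfl fun k _ => ?_
    rw [one_pow, pow_add]
    ring
  simp_rw [expand]
  rw [intervalIntegral.integral_finsetSum fun k _ =>
    ((continuous_pow _).intervalIntegrable _ _).const_mul _]
  refine sum_congr rfl fun k _ => ?_
  rw [intervalIntegral.integral_const_mul, integral_pow]
  push_cast
  ring

theorem add_mul_choose_mul_choose_pred (m d k : ℕ) (hd : 0 < d) (hk : d + k ≤ m) :
    (d + k) * (m.choose (d + k) * (d + k - 1).choose (d - 1)) =
      d * (m.choose d * (m - d).choose k) := by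
  obtain ⟨a, rfl⟩ : ∃ a, d = a + 1 := ⟨d - 1, by omega⟩
  have absorption : (a + 1 + k) * (a + k).choose a = (a + 1 + k).choose (a + 1) * (a + 1) := by
    rw [show a + 1 + k = a + k + 1 by omega]
    exact Nat.add_one_mul_choose_eq _ _
  have split := Nat.choose_mul (n := m) (k := a + 1 + k) (s := a + 1) (by omega)
  rw [show a + 1 + k - (a + 1) = k by omega] at split
  simp only [show a + 1 + k - 1 = a + k by omega, Nat.add_sub_cancel]
  calc (a + 1 + k) * (m.choose (a + 1 + k) * (a + k).choose a)
      = m.choose (a + 1 + k) * ((a + 1 + k) * (a + k).choose a) := by ring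
    _ = (a + 1) * (m.choose (a + 1) * (m - (a + 1)).choose k) := by rw [absorption, ← split]; ring

theorem sum_choose_mul_choose_pred_eq (m d : ℕ) (hd : 0 < d) (hdm : d ≤ m) :
    ((∑ j ∈ Icc d m, m.choose j * (j - 1).choose (d - 1) : ℕ) : ℝ) =
      m.choose d * (d * ∑ k ∈ range (m - d + 1), ((m - d).choose k : ℝ) / (d + k)) := by
  rw [← Ico_add_one_right_eq_Icc, sum_Ico_eq_sum_range, show m + 1 - d = m - d + 1 by omega]
  push_cast
  rw [mul_sum, mul_sum]
  refine sum_congr rfl fun k hk => ?_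
  have key : ((d + k : ℕ) : ℝ) * (m.choose (d + k) * (d + k - 1).choose (d - 1) : ℕ) =
      d * (m.choose d * (m - d).choose k : ℕ) :=
    mod_cast add_mul_choose_mul_choose_pred m d k hd (by rw [mem_range] at hk; omega)
  have hdk : (d : ℝ) + k ≠ 0 := by positivity
  push_cast at key
  field_simp
  linear_combination key

/-- `∑_{j=d}^{m} C(m,j)·C(j-1,d-1) = C(m,d) · ∫₀¹ d·x^{d-1}·(1+x)^{m-d} dx`;
equivalently `g(m,d-1)/C(m,d) = ∫₀¹ d·x^{d-1}·(1+x)^{m-d} dx`. -/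
theorem stmt19 (m d : ℕ) (h1 : 1 ≤ d) (h2 : d < m) :
    ((∑ j ∈ Finset.Icc d m, m.choose j * (j - 1).choose (d - 1) : ℕ) : ℝ) =
        (m.choose d : ℝ) * ∫ x in (0:ℝ)..1, (d : ℝ) * x ^ (d - 1) * (1 + x) ^ (m - d) ∧
      (g m (d - 1) : ℝ) / (m.choose d : ℝ) =
        ∫ x in (0:ℝ)..1, (d : ℝ) * x ^ (d - 1) * (1 + x) ^ (m - d) := by
  have integral_eq : ∫ x in (0:ℝ)..1, (d : ℝ) * x ^ (d - 1) * (1 + x) ^ (m - d) =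
      d * ∑ k ∈ range (m - d + 1), ((m - d).choose k : ℝ) / (d + k) := by
    simp only [mul_assoc, intervalIntegral.integral_const_mul, integral_pow_mul_one_add_pow]
    refine congrArg _ (sum_congr rfl fun k _ => ?_)
    rw [Nat.cast_pred h1]
    ring
  have sum_eq := sum_choose_mul_choose_pred_eq m d h1 h2.le
  have g_eq : g m (d - 1) = ∑ j ∈ Icc d m, m.choose j * (j - 1).choose (d - 1) := by
    rw [g, Nat.sub_add_cancel h1]
  have hC : (m.choose d : ℝ) ≠ 0 := by exact_mod_cast (Nat.choose_pos h2.le).ne'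
  refine ⟨by rw [integral_eq, sum_eq], ?_⟩
  rw [g_eq, sum_eq, integral_eq, mul_div_cancel_left₀ _ hC]
end
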